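/- arXiv:math/9506218 — 2 statements merged into one kernel-verified Lean document; each statement's English description precedes it below -/
import Mathlib

section
/- Let g be a finite-dimensional simple complex Lie algebra and let g₀ be a real form of g, i.e., a real Lie subalgebra of g (viewed as a real Lie algebra by restriction of scalars) such that g₀ ∩ (i • g₀) = 0 and g₀ + (i • g₀) = g. Then every real Lie subalgebra h of g with g₀ ⊆ h satisfies h = g₀ or h = g. -/
/-- If `g₀` is a real form of a finite-dimensional simple complex Lie algebra `L`,
then every real Lie subalgebra of `L` containing `g₀` equals `g₀` or all of `L`. -/
theorem stmt0 (L : Type*) [LieRing L] [LieAlgebra ℂ L]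
    [LieAlgebra ℝ L] [IsScalarTower ℝ ℂ L]
    [FiniteDimensional ℂ L] [LieAlgebra.IsSimple ℂ L]
    (g₀ : LieSubalgebra ℝ L)
    (h_inter : ∀ x ∈ g₀, ∀ y ∈ g₀, x = Complex.I • y → x = 0)
    (h_sum : ∀ x : L, ∃ a ∈ g₀, ∃ b ∈ g₀, x = a + Complex.I • b)
    (h : LieSubalgebra ℝ L) (hle : g₀ ≤ h) :
    h = g₀ ∨ h = ⊤ := by
  classical
  have hreal : ∀ (r : ℝ) (x : L), (r : ℂ) • x = r • x := fun r x => by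
    rw [← IsScalarTower.algebraMap_smul ℂ r x]; norm_num
  -- the set S of elements b of g₀ with I•b ∈ h
  let S : Submodule ℝ L :=
  { carrier := {b | b ∈ g₀ ∧ Complex.I • b ∈ h}
    add_mem' := fun {a b} ha hb =>
      ⟨g₀.add_mem ha.1 hb.1, by rw [smul_add]; exact h.add_mem ha.2 hb.2⟩
    zero_mem' := ⟨g₀.zero_mem, by rw [smul_zero]; exact h.zero_mem⟩
    smul_mem' := fun r b hb =>
      ⟨g₀.smul_mem r hb.1, by rw [smul_comm]; exact h.smul_mem r hb.2⟩ }
  have hSmem : ∀ b : L, b ∈ S ↔ (b ∈ g₀ ∧ Complex.I • b ∈ h) := fun b => Iff.rfl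
  have hbr : ∀ p ∈ g₀, ∀ u ∈ S, ⁅p, u⁆ ∈ S := by
    intro p hp u hu
    refine ⟨g₀.lie_mem hp hu.1, ?_⟩
    rw [← lie_smul Complex.I p u]
    exact h.lie_mem (hle hp) hu.2
  -- the complex ideal S + I • S
  let M : LieIdeal ℂ L :=
  { carrier := {x | ∃ u ∈ S, ∃ v ∈ S, x = u + Complex.I • v}
    add_mem' := by
      rintro x y ⟨u, hu, v, hv, rfl⟩ ⟨u', hu', v', hv', rfl⟩
      refine ⟨u + u', S.add_mem hu hu', v + v', S.add_mem hv hv', ?_⟩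
      rw [smul_add]; abel
    zero_mem' := ⟨0, S.zero_mem, 0, S.zero_mem, by simp⟩
    smul_mem' := by
      rintro c x ⟨u, hu, v, hv, rfl⟩
      refine ⟨c.re • u - c.im • v, S.sub_mem (S.smul_mem _ hu) (S.smul_mem _ hv),
        c.re • v + c.im • u, S.add_mem (S.smul_mem _ hv) (S.smul_mem _ hu), ?_⟩
      match_scalars <;> simp [Complex.ext_iff]
    lie_mem := by
      rintro x m ⟨u, hu, v, hv, rfl⟩
      obtain ⟨p, hp, q, hq, rfl⟩ := h_sum x
      refine ⟨⁅p, u⁆ - ⁅q, v⁆, S.sub_mem (hbr p hp u hu) (hbr q hq v hv),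
        ⁅p, v⁆ + ⁅q, u⁆, S.add_mem (hbr p hp v hv) (hbr q hq u hu), ?_⟩
      simp only [add_lie, lie_add, lie_smul, smul_lie, smul_add, smul_smul,
        Complex.I_mul_I, neg_one_smul]
      abel }
  have hMmem : ∀ x : L, x ∈ M ↔ ∃ u ∈ S, ∃ v ∈ S, x = u + Complex.I • v := fun x => Iff.rfl
  rcases LieAlgebra.IsSimple.eq_bot_or_eq_top M with hM | hM
  · -- M = ⊥, so S = 0, so h ≤ g₀
    left
    have hS0 : ∀ b ∈ S, b = (0 : L) := by
      intro b hb
      have : b ∈ M := ⟨b, hb, 0, S.zero_mem, by simp⟩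
      rw [hM] at this
      exact this
    apply le_antisymm _ hle
    intro x hx
    obtain ⟨a, ha, b, hb, rfl⟩ := h_sum x
    have hIb : Complex.I • b ∈ h := by
      have : Complex.I • b = (a + Complex.I • b) - a := by abel
      rw [this]; exact h.sub_mem hx (hle ha)
    have hb0 : b = 0 := hS0 b ⟨hb, hIb⟩
    rw [hb0, smul_zero, add_zero]
    exact ha
  · -- M = ⊤, so g₀ ⊆ S, so h = ⊤
    right
    have hgS : ∀ c ∈ g₀, c ∈ S := by
      intro c hc
      have hcM : c ∈ M := by rw [hM]; trivial
      obtain ⟨u, hu, v, hv, hcv⟩ := hcM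
      have h1 : c - u ∈ g₀ := g₀.sub_mem hc hu.1
      have h2 : c - u = Complex.I • v := by rw [hcv]; abel
      have h3 : c - u = 0 := h_inter _ h1 _ hv.1 h2
      have : c = u := by linear_combination (norm := abel) h3
      rw [this]; exact hu
    apply LieSubalgebra.ext
    intro x
    simp only [LieSubalgebra.mem_top, iff_true]
    obtain ⟨a, ha, b, hb, rfl⟩ := h_sum x
    exact h.add_mem (hle ha) (hgS b hb).2
end

section
/- Let p, q ≥ 1 and n = p + q. Let ω(w,z) = Σ_{j=1}^{n} (w_j z_{n+j} − w_{n+j} z_j) be the standard symplectic form on ℂ^{2n}, and let h(w,z) = Σ_{j=1}^{p} (w_j·conj(z_j) + w_{n+j}·conj(z_{n+j})) − Σ_{j=p+1}^{n} (w_j·conj(z_j) + w_{n+j}·conj(z_{n+j})) be the hermitian form of signature (2p,2q). If v, v' ∈ ℂ^{2n} are vectors such that h(v,v) and h(v',v') are both positive or both negative, then there exists an invertible complex 2n×2n matrix g satisfying ω(gw,gz) = ω(w,z) and h(gw,gz) = h(w,z) for all w,z ∈ ℂ^{2n}, and a nonzero scalar c ∈ ℂ with g·v = c·v'. -/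
/-!
Send `v ∈ ℂ^{2n}` to `Φ v ∈ ℍⁿ` with coordinates `v_i + j ε_i v_{n+i}`, where `ε_i = ±1` is the
sign of `h` on the `i`-th pair of coordinates. For the quaternionic hermitian form
`B(x, y) = ∑ ε_i x̄_i y_i` one computes `B(Φ w, Φ z) = h(z, w) + j ω(w, z)`, so every right
`ℍ`-linear isometry of `B`, transported back by `Φ`, is a complex matrix preserving `h` and `ω`.
After rescaling `v'` by a real number, `Φ v` and `Φ v'` have the same nonzero `B`-norm, and a
quaternionic Witt argument produces an isometry between them: for `a + ā = B(u, u)` and `a ≠ 0`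
the map `z ↦ z - u a⁻¹ B(u, z)` is an isometry, and with `u = x - y`, `a = B(u, x)` it sends
`x` to `y`. If `B(x - y, x) = 0`, use `u = x + y` instead and compose with `-1`.
-/

open Matrix MulOpposite Quaternion ComplexConjugate

section SesqForm

variable {D ι : Type*} [DivisionRing D] [StarRing D] [Fintype ι]

def sesqForm (A : Matrix ι ι D) (x y : ι → D) : D := star x ⬝ᵥ A *ᵥ y

namespace sesqForm

variable (A : Matrix ι ι D)

lemma add_left (x x' y : ι → D) : sesqForm A (x + x') y = sesqForm A x y + sesqForm A x' y := by
  simp [sesqForm, add_dotProduct]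

lemma sub_left (x x' y : ι → D) : sesqForm A (x - x') y = sesqForm A x y - sesqForm A x' y := by
  simp [sesqForm, sub_dotProduct]

lemma add_right (x y y' : ι → D) : sesqForm A x (y + y') = sesqForm A x y + sesqForm A x y' := by
  simp [sesqForm, mulVec_add, dotProduct_add]

lemma sub_right (x y y' : ι → D) : sesqForm A x (y - y') = sesqForm A x y - sesqForm A x y' := by
  simp [sesqForm, mulVec_sub, dotProduct_sub]

lemma neg_neg (x y : ι → D) : sesqForm A (-x) (-y) = sesqForm A x y := by
  simp [sesqForm, mulVec_neg]

lemma smul_left (x y : ι → D) (c : D) : sesqForm A (op c • x) y = star c * sesqForm A x y := by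
  simp [sesqForm, dotProduct, Finset.mul_sum, mul_assoc]

lemma smul_right (x y : ι → D) (c : D) : sesqForm A x (op c • y) = sesqForm A x y * c := by
  simp [sesqForm, mulVec_smul, dotProduct_smul]

variable {A}

lemma star_eq (hA : A.IsHermitian) (x y : ι → D) : star (sesqForm A x y) = sesqForm A y x := by
  rw [sesqForm, sesqForm, star_dotProduct, star_star, star_mulVec, hA.eq, dotProduct_mulVec]

end sesqForm

def reflection (A : Matrix ι ι D) (u : ι → D) (a : D) : (ι → D) →ₗ[Dᵐᵒᵖ] (ι → D) where
  toFun z := z - op (a⁻¹ * sesqForm A u z) • u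
  map_add' z z' := by
    rw [sesqForm.add_right, mul_add, op_add, add_smul]
    abel
  map_smul' c z := by
    induction c using MulOpposite.rec' with | h c =>
    rw [RingHom.id_apply, smul_sub, sesqForm.smul_right, ← mul_assoc, op_mul, mul_smul]

variable {A : Matrix ι ι D} {u : ι → D} {a : D}

lemma sesqForm_reflection (hA : A.IsHermitian) (ha : a ≠ 0) (hu : a + star a = sesqForm A u u)
    (w z : ι → D) :
    sesqForm A (reflection A u a w) (reflection A u a z) = sesqForm A w z := by
  have expand : sesqForm A (reflection A u a w) (reflection A u a z) = sesqForm A w z +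
      sesqForm A w u * ((star a)⁻¹ * (a + star a) * a⁻¹ - (star a)⁻¹ - a⁻¹) * sesqForm A u z := by
    simp only [reflection, LinearMap.coe_mk, AddHom.coe_mk, sesqForm.sub_left,
      sesqForm.sub_right, sesqForm.smul_left, sesqForm.smul_right, star_mul, star_inv₀,
      sesqForm.star_eq hA, hu]
    noncomm_ring
  have cancel : (star a)⁻¹ * (a + star a) * a⁻¹ - (star a)⁻¹ - a⁻¹ = 0 := by
    rw [mul_add, inv_mul_cancel₀ (star_ne_zero.mpr ha), add_mul, one_mul, mul_assoc,
      mul_inv_cancel₀ ha, mul_one]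
    abel
  rw [expand, cancel, mul_zero, zero_mul, add_zero]

lemma sesqForm_reflection_right (ha : a ≠ 0) (hu : a + star a = sesqForm A u u) (z : ι → D) :
    sesqForm A u (reflection A u a z) = -(star a * (a⁻¹ * sesqForm A u z)) := by
  simp only [reflection, LinearMap.coe_mk, AddHom.coe_mk, sesqForm.sub_right,
    sesqForm.smul_right, ← hu, add_mul, mul_inv_cancel_left₀ ha]
  abel

lemma reflection_star_reflection (ha : a ≠ 0) (hu : a + star a = sesqForm A u u) (z : ι → D) :
    reflection A u (star a) (reflection A u a z) = z := by
  rw [reflection, LinearMap.coe_mk, AddHom.coe_mk, sesqForm_reflection_right ha hu, mul_neg,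
    inv_mul_cancel_left₀ (star_ne_zero.mpr ha), op_neg, neg_smul, sub_neg_eq_add]
  simp only [reflection, LinearMap.coe_mk, AddHom.coe_mk, sub_add_cancel]

lemma exists_isometry_apply_eq_of_sesqForm_sub_ne_zero (hA : A.IsHermitian) {x y : ι → D}
    (hxy : sesqForm A x x = sesqForm A y y) (hx : sesqForm A (x - y) x ≠ 0) :
    ∃ T : (ι → D) ≃ₗ[Dᵐᵒᵖ] (ι → D),
      (∀ w z, sesqForm A (T w) (T z) = sesqForm A w z) ∧ T x = y := by
  set a := sesqForm A (x - y) x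
  have hu : a + star a = sesqForm A (x - y) (x - y) := by
    rw [sesqForm.star_eq hA]
    simp only [a, sesqForm.sub_left, sesqForm.sub_right, hxy]
    abel
  have hu' : star a + star (star a) = sesqForm A (x - y) (x - y) := by
    rw [star_star, add_comm, hu]
  have right_inv (z : ι → D) :
      reflection A (x - y) a (reflection A (x - y) (star a) z) = z := by
    simpa only [star_star] using reflection_star_reflection (star_ne_zero.mpr hx) hu' z
  refine ⟨{ reflection A (x - y) a with
      invFun := reflection A (x - y) (star a)
      left_inv := reflection_star_reflection hx hu
      right_inv := right_inv },
    sesqForm_reflection hA hx hu, ?_⟩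
  change x - op (a⁻¹ * a) • (x - y) = y
  rw [inv_mul_cancel₀ hx, op_one, one_smul, sub_sub_cancel]

theorem exists_isometry_apply_eq [NeZero (2 : D)] (hA : A.IsHermitian) {x y : ι → D}
    (hxy : sesqForm A x x = sesqForm A y y) (hx : sesqForm A x x ≠ 0) :
    ∃ T : (ι → D) ≃ₗ[Dᵐᵒᵖ] (ι → D),
      (∀ w z, sesqForm A (T w) (T z) = sesqForm A w z) ∧ T x = y := by
  by_cases hxy' : sesqForm A (x - y) x ≠ 0
  · exact exists_isometry_apply_eq_of_sesqForm_sub_ne_zero hA hxy hxy'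
  have hyx : sesqForm A y x = sesqForm A x x := by
    rw [not_not, sesqForm.sub_left, sub_eq_zero] at hxy'
    exact hxy'.symm
  have hneg : sesqForm A (x - -y) x ≠ 0 := by
    rw [sub_neg_eq_add, sesqForm.add_left, hyx, ← two_mul]
    exact mul_ne_zero two_ne_zero hx
  obtain ⟨T, hT, hTx⟩ := exists_isometry_apply_eq_of_sesqForm_sub_ne_zero hA
    (by rw [sesqForm.neg_neg, hxy]) hneg
  refine ⟨T.trans (.neg Dᵐᵒᵖ), fun w z => ?_, by simp [hTx]⟩
  change sesqForm A (-T w) (-T z) = _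
  rw [sesqForm.neg_neg, hT]

end SesqForm

namespace Quaternion

instance : CharZero ℍ[ℝ] := charZero_of_injective_algebraMap (algebraMap ℝ ℍ[ℝ]).injective

/-- `(a, b) ↦ a + j b`. -/
noncomputable def complexProdEquiv : (ℂ × ℂ) ≃ₗ[ℝ] ℍ[ℝ] where
  toFun x := ⟨x.1.re, x.1.im, x.2.re, -x.2.im⟩
  invFun q := (⟨q.re, q.imI⟩, ⟨q.imJ, -q.imK⟩)
  map_add' x y := by
    ext <;> simp only [Prod.fst_add, Prod.snd_add, Complex.add_re, Complex.add_im, neg_add] <;>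
      rfl
  map_smul' r x := by
    ext <;> simp only [Prod.smul_fst, Prod.smul_snd, Complex.real_smul, Complex.re_ofReal_mul,
      Complex.im_ofReal_mul, ← mul_neg] <;> rfl
  left_inv x := by simp
  right_inv q := by ext <;> simp

@[simp] lemma re_complexProdEquiv (a b : ℂ) : (complexProdEquiv (a, b)).re = a.re := rfl

@[simp] lemma imI_complexProdEquiv (a b : ℂ) : (complexProdEquiv (a, b)).imI = a.im := rfl

@[simp] lemma imJ_complexProdEquiv (a b : ℂ) : (complexProdEquiv (a, b)).imJ = b.re := rfl

@[simp] lemma imK_complexProdEquiv (a b : ℂ) : (complexProdEquiv (a, b)).imK = -b.im := rfl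

lemma complexProdEquiv_mul_coeComplex (a b c : ℂ) :
    complexProdEquiv (a, b) * (c : ℍ[ℝ]) = complexProdEquiv (a * c, b * c) := by
  ext <;> simp [re_mul, imI_mul, imJ_mul, imK_mul] <;> ring

lemma star_complexProdEquiv_mul (a b a' b' : ℂ) :
    star (complexProdEquiv (a, b)) * complexProdEquiv (a', b') =
      complexProdEquiv (conj a * a' + conj b * b', a * b' - b * a') := by
  ext <;> simp [re_mul, imI_mul, imJ_mul, imK_mul] <;> ring

lemma coe_real_mul_complexProdEquiv (r : ℝ) (x : ℂ × ℂ) :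
    (r : ℍ[ℝ]) * complexProdEquiv x = complexProdEquiv (r • x) := by
  rw [map_smul, coe_mul_eq_smul]

end Quaternion

namespace Fin

variable {n : ℕ}

def fstHalf (i : Fin n) : Fin (2 * n) := ⟨i, by omega⟩

def sndHalf (i : Fin n) : Fin (2 * n) := ⟨n + i, by omega⟩

@[simp] lemma val_fstHalf (i : Fin n) : (fstHalf i : ℕ) = i := rfl

@[simp] lemma val_sndHalf (i : Fin n) : (sndHalf i : ℕ) = n + i := rfl

lemma sum_two_mul {M : Type*} [AddCommMonoid M] (f : Fin (2 * n) → M) :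
    ∑ k, f k = ∑ i, (f (fstHalf i) + f (sndHalf i)) := by
  rw [← (finCongr (two_mul n)).symm.sum_comp, Fin.sum_univ_add, ← Finset.sum_add_distrib]
  rfl

lemma exists_eq_fstHalf_or_sndHalf (k : Fin (2 * n)) :
    (∃ i, k = fstHalf i) ∨ ∃ i, k = sndHalf i := by
  by_cases hk : (k : ℕ) < n
  · exact .inl ⟨⟨k, hk⟩, rfl⟩
  · exact .inr ⟨⟨k - n, by omega⟩, Fin.ext (by simp only [val_sndHalf]; omega)⟩

end Fin

open Fin

def sympForm (n : ℕ) (w z : Fin (2 * n) → ℂ) : ℂ :=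
  ∑ j : Fin n, (w (fstHalf j) * z (sndHalf j) - w (sndHalf j) * z (fstHalf j))

lemma sympForm_self (n : ℕ) (w : Fin (2 * n) → ℂ) : sympForm n w w = 0 :=
  Finset.sum_eq_zero fun _ _ => by ring

section Signature

variable (p q : ℕ)

def hermForm (w z : Fin (2 * (p + q)) → ℂ) : ℂ :=
  ∑ j : Fin (2 * (p + q)),
    (if (j : ℕ) < p ∨ ((p + q) ≤ (j : ℕ) ∧ (j : ℕ) < (p + q) + p)
      then w j * conj (z j) else -(w j * conj (z j)))

def signature (i : Fin (p + q)) : ℝ := if (i : ℕ) < p then 1 else -1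

lemma signature_mul_self (i : Fin (p + q)) : signature p q i * signature p q i = 1 := by
  unfold signature
  split_ifs <;> norm_num

lemma hermForm_eq_sum (w z : Fin (2 * (p + q)) → ℂ) :
    hermForm p q w z = ∑ i, signature p q i *
      (w (fstHalf i) * conj (z (fstHalf i)) + w (sndHalf i) * conj (z (sndHalf i))) := by
  rw [hermForm, sum_two_mul]
  refine Finset.sum_congr rfl fun i _ => ?_
  have hi := i.2
  by_cases hip : (i : ℕ) < p
  · rw [if_pos (by simp only [val_fstHalf]; omega), if_pos (by simp only [val_sndHalf]; omega)]
    simp [signature, hip]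
  · rw [if_neg (by simp only [val_fstHalf]; omega), if_neg (by simp only [val_sndHalf]; omega)]
    simp [signature, hip]
    ring

lemma hermForm_smul (c : ℂ) (w z : Fin (2 * (p + q)) → ℂ) :
    hermForm p q (c • w) (c • z) = c * conj c * hermForm p q w z := by
  simp only [hermForm_eq_sum, Finset.mul_sum, Pi.smul_apply, smul_eq_mul, map_mul]
  exact Finset.sum_congr rfl fun _ _ => by ring

/-- The factor `signature` on the second coordinate makes the `j`-part of the quaternionic form
equal to `sympForm`, with no signs. -/
noncomputable def toQuaternion : (Fin (2 * (p + q)) → ℂ) →ₗ[ℝ] (Fin (p + q) → ℍ[ℝ]) where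
  toFun v i := complexProdEquiv (v (fstHalf i), signature p q i * v (sndHalf i))
  map_add' v w := by
    funext i
    simp only [Pi.add_apply, mul_add, ← map_add, Prod.mk_add_mk]
  map_smul' r v := by
    funext i
    simp only [Pi.smul_apply, RingHom.id_apply, ← map_smul, Prod.smul_mk, mul_smul_comm]

lemma toQuaternion_injective : Function.Injective (toQuaternion p q) := by
  refine (injective_iff_map_eq_zero _).mpr fun v hv => funext fun k => ?_
  have hzero (i : Fin (p + q)) : v (fstHalf i) = 0 ∧ v (sndHalf i) = 0 := by
    have hs : (signature p q i : ℂ) ≠ 0 :=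
      Complex.ofReal_ne_zero.mpr (left_ne_zero_of_mul_eq_one (signature_mul_self p q i))
    have := (map_eq_zero_iff _ complexProdEquiv.injective).mp (congrFun hv i)
    rw [Prod.mk_eq_zero, mul_eq_zero] at this
    exact ⟨this.1, this.2.resolve_left hs⟩
  rcases exists_eq_fstHalf_or_sndHalf k with ⟨i, rfl⟩ | ⟨i, rfl⟩
  exacts [(hzero i).1, (hzero i).2]

noncomputable def quaternionEquiv : (Fin (2 * (p + q)) → ℂ) ≃ₗ[ℝ] (Fin (p + q) → ℍ[ℝ]) :=
  LinearMap.linearEquivOfInjective _ (toQuaternion_injective p q) <| by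
    simp only [Module.finrank_pi_fintype, Complex.finrank_real_complex, finrank_eq_four,
      Finset.sum_const, Finset.card_univ, Fintype.card_fin, smul_eq_mul]
    ring

lemma quaternionEquiv_apply (v : Fin (2 * (p + q)) → ℂ) :
    quaternionEquiv p q v = toQuaternion p q v := rfl

lemma quaternionEquiv_smul (c : ℂ) (v : Fin (2 * (p + q)) → ℂ) :
    quaternionEquiv p q (c • v) = op (c : ℍ[ℝ]) • quaternionEquiv p q v := by
  funext i
  simp only [quaternionEquiv_apply, toQuaternion, LinearMap.coe_mk, AddHom.coe_mk, Pi.smul_apply,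
    op_smul_eq_mul, complexProdEquiv_mul_coeComplex, smul_eq_mul]
  congr 2 <;> ring

noncomputable def signatureMatrix : Matrix (Fin (p + q)) (Fin (p + q)) ℍ[ℝ] :=
  diagonal fun i => (signature p q i : ℍ[ℝ])

lemma signatureMatrix_isHermitian : (signatureMatrix p q).IsHermitian :=
  isHermitian_diagonal_of_self_adjoint _ (funext fun _ => star_coe _)

lemma sesqForm_quaternionEquiv (w z : Fin (2 * (p + q)) → ℂ) :
    sesqForm (signatureMatrix p q) (quaternionEquiv p q w) (quaternionEquiv p q z) =
      complexProdEquiv (hermForm p q z w, sympForm (p + q) w z) := by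
  simp only [sesqForm, signatureMatrix, dotProduct, mulVec_diagonal, Pi.star_apply,
    quaternionEquiv_apply, toQuaternion, LinearMap.coe_mk, AddHom.coe_mk,
    coe_real_mul_complexProdEquiv, Prod.smul_mk, star_complexProdEquiv_mul, ← map_sum,
    hermForm_eq_sum, sympForm]
  congr 1
  ext <;> simp only [Prod.fst_sum, Prod.snd_sum] <;> refine Finset.sum_congr rfl fun i _ => ?_ <;>
    have hs : (signature p q i : ℂ) * signature p q i = 1 := mod_cast signature_mul_self p q i <;>
    simp only [Complex.real_smul, map_mul, Complex.conj_ofReal]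
  · linear_combination (signature p q i * conj (w (sndHalf i)) * z (sndHalf i)) * hs
  · linear_combination (w (fstHalf i) * z (sndHalf i) - w (sndHalf i) * z (fstHalf i)) * hs

variable {p q}

noncomputable def complexLinearEquivOf
    (T : (Fin (p + q) → ℍ[ℝ]) ≃ₗ[ℍ[ℝ]ᵐᵒᵖ] (Fin (p + q) → ℍ[ℝ])) :
    (Fin (2 * (p + q)) → ℂ) ≃ₗ[ℂ] (Fin (2 * (p + q)) → ℂ) :=
  AddEquiv.toLinearEquiv ((quaternionEquiv p q).toAddEquiv.trans
      (T.toAddEquiv.trans (quaternionEquiv p q).symm.toAddEquiv)) fun c w => by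
    apply (quaternionEquiv p q).injective
    change quaternionEquiv p q ((quaternionEquiv p q).symm (T (quaternionEquiv p q (c • w)))) =
      quaternionEquiv p q (c • (quaternionEquiv p q).symm (T (quaternionEquiv p q w)))
    rw [quaternionEquiv_smul, quaternionEquiv_smul, LinearEquiv.apply_symm_apply,
      LinearEquiv.apply_symm_apply, map_smul]

lemma quaternionEquiv_complexLinearEquivOf
    (T : (Fin (p + q) → ℍ[ℝ]) ≃ₗ[ℍ[ℝ]ᵐᵒᵖ] (Fin (p + q) → ℍ[ℝ])) (w : Fin (2 * (p + q)) → ℂ) :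
    quaternionEquiv p q (complexLinearEquivOf T w) = T (quaternionEquiv p q w) :=
  LinearEquiv.apply_symm_apply _ _

lemma hermForm_sympForm_complexLinearEquivOf
    {T : (Fin (p + q) → ℍ[ℝ]) ≃ₗ[ℍ[ℝ]ᵐᵒᵖ] (Fin (p + q) → ℍ[ℝ])}
    (hT : ∀ w z, sesqForm (signatureMatrix p q) (T w) (T z) = sesqForm (signatureMatrix p q) w z)
    (w z : Fin (2 * (p + q)) → ℂ) :
    hermForm p q (complexLinearEquivOf T w) (complexLinearEquivOf T z) = hermForm p q w z ∧
      sympForm (p + q) (complexLinearEquivOf T w) (complexLinearEquivOf T z) =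
        sympForm (p + q) w z := by
  have key (w z : Fin (2 * (p + q)) → ℂ) :
      (hermForm p q (complexLinearEquivOf T z) (complexLinearEquivOf T w),
        sympForm (p + q) (complexLinearEquivOf T w) (complexLinearEquivOf T z)) =
      (hermForm p q z w, sympForm (p + q) w z) := by
    apply complexProdEquiv.injective
    rw [← sesqForm_quaternionEquiv, ← sesqForm_quaternionEquiv,
      quaternionEquiv_complexLinearEquivOf, quaternionEquiv_complexLinearEquivOf, hT]
  exact ⟨(Prod.mk.inj (key z w)).1, (Prod.mk.inj (key w z)).2⟩

end Signature

open ComplexOrder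

lemma Complex.exists_real_mul_self_mul_eq {a b : ℂ} (h : (0 < a ∧ 0 < b) ∨ (a < 0 ∧ b < 0)) :
    ∃ t : ℝ, t ≠ 0 ∧ a = (t : ℂ) * t * b := by
  obtain ⟨hab, ha, hb⟩ : 0 < a.re / b.re ∧ a.im = 0 ∧ b.im = 0 := by
    rcases h with ⟨ha, hb⟩ | ⟨ha, hb⟩
    · rw [Complex.pos_iff] at ha hb
      exact ⟨div_pos ha.1 hb.1, ha.2.symm, hb.2.symm⟩
    · rw [Complex.neg_iff] at ha hb
      exact ⟨div_pos_of_neg_of_neg ha.1 hb.1, ha.2, hb.2⟩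
  refine ⟨√(a.re / b.re), (Real.sqrt_pos.mpr hab).ne', Complex.ext ?_ ?_⟩
  · have hb0 : b.re ≠ 0 := fun h0 => by simp [h0] at hab
    simp [hb, ← Complex.ofReal_mul, Real.mul_self_sqrt hab.le, hb0]
  · simp [ha, hb]

/-- `Sp(p,q) ≅ U(2p,2q) ∩ Sp(n,ℂ)` (with `n = p + q`) acts transitively on the
positive lines and on the negative lines in `ℂ^{2n}`, where positivity is with respect
to the hermitian form of signature `(2p,2q)` given by
`h w z = ∑_{j<p} (w_j z̄_j + w_{n+j} z̄_{n+j}) − ∑_{p≤j<n} (w_j z̄_j + w_{n+j} z̄_{n+j})`,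
and the group preserves in addition the standard symplectic form. -/
theorem stmt8 (p q : ℕ)
    (ω : (Fin (2 * (p + q)) → ℂ) → (Fin (2 * (p + q)) → ℂ) → ℂ)
    (hω : ∀ w z, ω w z = ∑ j : Fin (p + q),
      (w (⟨j.1, by have := j.2; omega⟩ : Fin (2 * (p + q))) *
          z (⟨(p + q) + j.1, by have := j.2; omega⟩ : Fin (2 * (p + q))) -
        w (⟨(p + q) + j.1, by have := j.2; omega⟩ : Fin (2 * (p + q))) *
          z (⟨j.1, by have := j.2; omega⟩ : Fin (2 * (p + q)))))
    (h : (Fin (2 * (p + q)) → ℂ) → (Fin (2 * (p + q)) → ℂ) → ℂ)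
    (hdef : ∀ w z, h w z = ∑ j : Fin (2 * (p + q)),
      (if (j : ℕ) < p ∨ ((p + q) ≤ (j : ℕ) ∧ (j : ℕ) < (p + q) + p)
        then w j * (starRingEnd ℂ) (z j) else -(w j * (starRingEnd ℂ) (z j))))
    (v v' : Fin (2 * (p + q)) → ℂ)
    (hsign : (0 < h v v ∧ 0 < h v' v') ∨ (h v v < 0 ∧ h v' v' < 0)) :
    ∃ g : Matrix (Fin (2 * (p + q))) (Fin (2 * (p + q))) ℂ, IsUnit g ∧
      (∀ w z, ω (g.mulVec w) (g.mulVec z) = ω w z) ∧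
      (∀ w z, h (g.mulVec w) (g.mulVec z) = h w z) ∧
      ∃ c : ℂ, c ≠ 0 ∧ g.mulVec v = c • v' := by
  obtain rfl : ω = sympForm (p + q) := funext₂ hω
  obtain rfl : h = hermForm p q := funext₂ hdef
  have hv : hermForm p q v v ≠ 0 := by
    rcases hsign with ⟨hv, -⟩ | ⟨hv, -⟩
    exacts [hv.ne', hv.ne]
  obtain ⟨t, ht, hvt⟩ := Complex.exists_real_mul_self_mul_eq hsign
  set Φ := quaternionEquiv p q
  have hnorm (u : Fin (2 * (p + q)) → ℂ) :
      sesqForm (signatureMatrix p q) (Φ u) (Φ u) = complexProdEquiv (hermForm p q u u, 0) := by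
    rw [sesqForm_quaternionEquiv, sympForm_self]
  obtain ⟨T, hT, hTv⟩ := exists_isometry_apply_eq (signatureMatrix_isHermitian p q)
    (x := Φ v) (y := Φ ((t : ℂ) • v'))
    (by rw [hnorm, hnorm, hermForm_smul, Complex.conj_ofReal, hvt])
    (by rw [hnorm]; simpa using hv)
  set g := complexLinearEquivOf T
  have hg (w : Fin (2 * (p + q)) → ℂ) : LinearMap.toMatrix' g.toLinearMap *ᵥ w = g w :=
    LinearMap.toMatrix'_mulVec _ w
  refine ⟨LinearMap.toMatrix' g.toLinearMap,
    LinearMap.isUnit_toMatrix'_iff.mpr ((Module.End.isUnit_iff _).mpr g.bijective),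
    fun w z => by rw [hg, hg]; exact (hermForm_sympForm_complexLinearEquivOf hT w z).2,
    fun w z => by rw [hg, hg]; exact (hermForm_sympForm_complexLinearEquivOf hT w z).1,
    t, Complex.ofReal_ne_zero.mpr ht, ?_⟩
  rw [hg]
  exact Φ.injective (by rw [quaternionEquiv_complexLinearEquivOf, hTv])
end
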